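/- Let G and H be finite simple graphs such that H has at least one vertex, and let h be a surjective p-morphism from Pos(G) onto Pos(H). Then h({∞_a, ∞_b}) = {∞_a, ∞_b}. -/

import Mathlib

/-- The carrier of the poset `Pos(G)`: vertices, two copies of the vertices,
two copies of the edges, and four auxiliary elements. -/
inductive PosElem (V E : Type) : Type where
  | ver (v : V)
  | verA (v : V)
  | verB (v : V)
  | edge1 (e : E)
  | edge2 (e : E)
  | top1
  | top2
  | infA
  | infB

/-- The covering relation of the poset `Pos(G)`, for a graph `G` together with a
choice `ε` of an ordered pair of endpoints for each edge. -/
inductive PosCov {V : Type} (G : SimpleGraph V) (ε : ↥G.edgeSet → V × V) :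
    PosElem V ↥G.edgeSet → PosElem V ↥G.edgeSet → Prop where
  | ver_verA (v : V) : PosCov G ε (.ver v) (.verA v)
  | ver_verB (v : V) : PosCov G ε (.ver v) (.verB v)
  | verA_infA (v : V) : PosCov G ε (.verA v) .infA
  | verB_infB (v : V) : PosCov G ε (.verB v) .infB
  | edge1_top1 (e : ↥G.edgeSet) : PosCov G ε (.edge1 e) .top1
  | edge1_top2 (e : ↥G.edgeSet) : PosCov G ε (.edge1 e) .top2
  | edge2_top1 (e : ↥G.edgeSet) : PosCov G ε (.edge2 e) .top1
  | edge2_top2 (e : ↥G.edgeSet) : PosCov G ε (.edge2 e) .top2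
  | isolA_top1 (v : V) (hv : ∀ w, ¬ G.Adj v w) : PosCov G ε (.verA v) .top1
  | isolA_top2 (v : V) (hv : ∀ w, ¬ G.Adj v w) : PosCov G ε (.verA v) .top2
  | isolB_top1 (v : V) (hv : ∀ w, ¬ G.Adj v w) : PosCov G ε (.verB v) .top1
  | isolB_top2 (v : V) (hv : ∀ w, ¬ G.Adj v w) : PosCov G ε (.verB v) .top2
  | ua_edge1 (e : ↥G.edgeSet) : PosCov G ε (.verA (ε e).1) (.edge1 e)
  | vb_edge1 (e : ↥G.edgeSet) : PosCov G ε (.verB (ε e).2) (.edge1 e)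
  | ub_edge2 (e : ↥G.edgeSet) : PosCov G ε (.verB (ε e).1) (.edge2 e)
  | va_edge2 (e : ↥G.edgeSet) : PosCov G ε (.verA (ε e).2) (.edge2 e)

/-- The order of `Pos(G)`: the reflexive-transitive closure of the covering relation. -/
def PosLe {V : Type} (G : SimpleGraph V) (ε : ↥G.edgeSet → V × V)
    (x y : PosElem V ↥G.edgeSet) : Prop :=
  Relation.ReflTransGen (PosCov G ε) x y

/-- `ε` assigns to every edge an ordered pair of its two endpoints. -/
def OrientOK {V : Type} (G : SimpleGraph V) (ε : ↥G.edgeSet → V × V) : Prop :=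
  ∀ e : ↥G.edgeSet, (e : Sym2 V) = s((ε e).1, (ε e).2)

/-- A p-morphism with respect to given order relations: the homomorphism property (HP)
and the backward property (BP). -/
def IsPMorphismRel {α β : Type} (leP : α → α → Prop) (leQ : β → β → Prop)
    (h : α → β) : Prop :=
  (∀ x y, leP x y → leQ (h x) (h y)) ∧
  (∀ (x : α) (y : β), leQ (h x) y → ∃ z : α, leP x z ∧ h z = y)


namespace PosInfAux

open PosElem

variable {V : Type} {G : SimpleGraph V} {ε : ↥G.edgeSet → V × V}

lemma posle_refl {x : PosElem V ↥G.edgeSet} : PosLe G ε x x :=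
  Relation.ReflTransGen.refl

lemma posle_single {x y : PosElem V ↥G.edgeSet} (hc : PosCov G ε x y) : PosLe G ε x y :=
  Relation.ReflTransGen.single hc

lemma posle_head {x y z : PosElem V ↥G.edgeSet} (hc : PosCov G ε x y)
    (hl : PosLe G ε y z) : PosLe G ε x z :=
  Relation.ReflTransGen.head hc hl

lemma posle_trans {x y z : PosElem V ↥G.edgeSet} (h1 : PosLe G ε x y)
    (h2 : PosLe G ε y z) : PosLe G ε x z :=
  Relation.ReflTransGen.trans h1 h2

lemma le_of_nocov {x y : PosElem V ↥G.edgeSet} (hxy : PosLe G ε x y)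
    (hx : ∀ z, ¬ PosCov G ε x z) : y = x := by
  rcases Relation.ReflTransGen.cases_head hxy with rfl | ⟨c, hc, -⟩
  · rfl
  · exact absurd hc (hx c)

lemma nocov_top1 : ∀ z, ¬ PosCov G ε .top1 z := by intro z hz; cases hz
lemma nocov_top2 : ∀ z, ¬ PosCov G ε .top2 z := by intro z hz; cases hz
lemma nocov_infA : ∀ z, ¬ PosCov G ε .infA z := by intro z hz; cases hz
lemma nocov_infB : ∀ z, ¬ PosCov G ε .infB z := by intro z hz; cases hz

lemma exists_max (x : PosElem V ↥G.edgeSet) :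
    ∃ m, PosLe G ε x m ∧ (m = top1 ∨ m = top2 ∨ m = infA ∨ m = infB) := by
  cases x with
  | ver v =>
      exact ⟨infA, posle_head (.ver_verA v) (posle_single (.verA_infA v)), by tauto⟩
  | verA v => exact ⟨infA, posle_single (.verA_infA v), by tauto⟩
  | verB v => exact ⟨infB, posle_single (.verB_infB v), by tauto⟩
  | edge1 e => exact ⟨top1, posle_single (.edge1_top1 e), by tauto⟩
  | edge2 e => exact ⟨top1, posle_single (.edge2_top1 e), by tauto⟩
  | top1 => exact ⟨top1, posle_refl, by tauto⟩
  | top2 => exact ⟨top2, posle_refl, by tauto⟩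
  | infA => exact ⟨infA, posle_refl, by tauto⟩
  | infB => exact ⟨infB, posle_refl, by tauto⟩

lemma endpoint_cases (hε : OrientOK G ε) {v w : V} (hw : G.Adj v w) :
    ∃ e : ↥G.edgeSet, (ε e).1 = v ∨ (ε e).2 = v := by
  obtain ⟨e, he⟩ : ∃ e : ↥G.edgeSet, (e : Sym2 V) = s(v, w) :=
    ⟨⟨s(v, w), G.mem_edgeSet.mpr hw⟩, rfl⟩
  have h2 : s((ε e).1, (ε e).2) = s(v, w) := (hε e).symm.trans he
  rw [Sym2.eq_iff] at h2
  refine ⟨e, ?_⟩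
  rcases h2 with ⟨h1, -⟩ | ⟨-, h1⟩
  · exact Or.inl h1
  · exact Or.inr h1

lemma verA_le_tops (hε : OrientOK G ε) (v : V) :
    PosLe G ε (verA v) top1 ∧ PosLe G ε (verA v) top2 := by
  by_cases hiso : ∀ w, ¬ G.Adj v w
  · exact ⟨posle_single (.isolA_top1 v hiso), posle_single (.isolA_top2 v hiso)⟩
  · push_neg at hiso
    obtain ⟨w, hw⟩ := hiso
    obtain ⟨e, he | he⟩ := endpoint_cases hε hw
    · refine ⟨posle_head ?_ (posle_single (.edge1_top1 e)),
        posle_head ?_ (posle_single (.edge1_top2 e))⟩ <;>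
      · rw [← he]; exact .ua_edge1 e
    · refine ⟨posle_head ?_ (posle_single (.edge2_top1 e)),
        posle_head ?_ (posle_single (.edge2_top2 e))⟩ <;>
      · rw [← he]; exact .va_edge2 e

lemma verB_le_tops (hε : OrientOK G ε) (v : V) :
    PosLe G ε (verB v) top1 ∧ PosLe G ε (verB v) top2 := by
  by_cases hiso : ∀ w, ¬ G.Adj v w
  · exact ⟨posle_single (.isolB_top1 v hiso), posle_single (.isolB_top2 v hiso)⟩
  · push_neg at hiso
    obtain ⟨w, hw⟩ := hiso
    obtain ⟨e, he | he⟩ := endpoint_cases hε hw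
    · refine ⟨posle_head ?_ (posle_single (.edge2_top1 e)),
        posle_head ?_ (posle_single (.edge2_top2 e))⟩ <;>
      · rw [← he]; exact .ub_edge2 e
    · refine ⟨posle_head ?_ (posle_single (.edge1_top1 e)),
        posle_head ?_ (posle_single (.edge1_top2 e))⟩ <;>
      · rw [← he]; exact .vb_edge1 e

/-- Elements that are not `ver`, `verA` or `infA`. -/
def Afree : PosElem V ↥G.edgeSet → Prop
  | .ver _ => False
  | .verA _ => False
  | .infA => False
  | _ => True

/-- Elements that are not `ver`, `verB` or `infB`. -/
def Bfree : PosElem V ↥G.edgeSet → Prop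
  | .ver _ => False
  | .verB _ => False
  | .infB => False
  | _ => True

lemma afree_mono {x y : PosElem V ↥G.edgeSet} (hxy : PosLe G ε x y)
    (hx : Afree (G := G) x) : Afree (G := G) y := by
  induction hxy with
  | refl => exact hx
  | tail _ hc ih =>
      cases hc <;> first | exact ih.elim | exact trivial

lemma bfree_mono {x y : PosElem V ↥G.edgeSet} (hxy : PosLe G ε x y)
    (hx : Bfree (G := G) x) : Bfree (G := G) y := by
  induction hxy with
  | refl => exact hx
  | tail _ hc ih =>
      cases hc <;> first | exact ih.elim | exact trivial

lemma verB_not_le_infA (v : V) : ¬ PosLe G ε (verB v) infA :=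
  fun hle => afree_mono hle trivial

lemma verA_not_le_infB (v : V) : ¬ PosLe G ε (verA v) infB :=
  fun hle => bfree_mono hle trivial

lemma pigeon_t {α : Type} {a b c p q r t : α}
    (hp : p = a ∨ p = b ∨ p = c) (hq : q = a ∨ q = b ∨ q = c) (hr : r = a ∨ r = b ∨ r = c)
    (hpq : p ≠ q) (hpr : p ≠ r) (hqr : q ≠ r)
    (htp : t ≠ p) (htq : t ≠ q) (htr : t ≠ r) :
    t ≠ a ∧ t ≠ b ∧ t ≠ c := by
  refine ⟨?_, ?_, ?_⟩ <;> rintro rfl <;>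
    rcases hp with rfl | rfl | rfl <;> rcases hq with rfl | rfl | rfl <;>
      rcases hr with rfl | rfl | rfl <;> simp_all

lemma pigeon3 {α : Type} {a b c p q r s : α}
    (hp : p = a ∨ p = b ∨ p = c) (hq : q = a ∨ q = b ∨ q = c)
    (hr : r = a ∨ r = b ∨ r = c) (hs : s = a ∨ s = b ∨ s = c)
    (h1 : p ≠ q) (h2 : p ≠ r) (h3 : p ≠ s) (h4 : q ≠ r) (h5 : q ≠ s) (h6 : r ≠ s) :
    False := by
  rcases hp with rfl | rfl | rfl <;> rcases hq with rfl | rfl | rfl <;>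
    rcases hr with rfl | rfl | rfl <;> rcases hs with rfl | rfl | rfl <;> simp_all

section PM

variable {VG VH : Type} {G : SimpleGraph VG} {H : SimpleGraph VH}
  {εG : ↥G.edgeSet → VG × VG} {εH : ↥H.edgeSet → VH × VH}
  {h : PosElem VG ↥G.edgeSet → PosElem VH ↥H.edgeSet}

/-- Every maximal element of `Pos(H)` is the image of one of the four maximal
elements of `Pos(G)`. -/
lemma hit (hsurj : Function.Surjective h)
    (hpm : IsPMorphismRel (PosLe G εG) (PosLe H εH) h)
    (μ : PosElem VH ↥H.edgeSet) (hμ : ∀ z, ¬ PosCov H εH μ z) :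
    μ = h .infA ∨ μ = h .infB ∨ μ = h .top1 ∨ μ = h .top2 := by
  obtain ⟨x, rfl⟩ := hsurj μ
  obtain ⟨m, hxm, hm⟩ := exists_max (G := G) (ε := εG) x
  have h1 : PosLe H εH (h x) (h m) := hpm.1 _ _ hxm
  have h2 : h m = h x := le_of_nocov h1 hμ
  rcases hm with rfl | rfl | rfl | rfl
  · exact Or.inr (Or.inr (Or.inl h2.symm))
  · exact Or.inr (Or.inr (Or.inr h2.symm))
  · exact Or.inl h2.symm
  · exact Or.inr (Or.inl h2.symm)

/-- The core contradiction: no element of `{infA, infB}` of `Pos(G)` can be mapped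
to `top1` or `top2` of `Pos(H)`. -/
lemma core (hεH : OrientOK H εH)
    (hsurj : Function.Surjective h)
    (hpm : IsPMorphismRel (PosLe G εG) (PosLe H εH) h)
    (iG iG' x : PosElem VG ↥G.edgeSet)
    (hset : iG = .infA ∧ iG' = .infB ∨ iG = .infB ∧ iG' = .infA)
    (hxiG' : PosCov G εG x iG')
    (hx1 : PosLe G εG x .top1) (hx2 : PosLe G εG x .top2)
    (hxniG : ¬ PosLe G εG x iG)
    (t : PosElem VH ↥H.edgeSet) (ht : t = .top1 ∨ t = .top2)
    (hiGt : h iG = t) : False := by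
  obtain ⟨t', ht', htt'⟩ : ∃ t' : PosElem VH ↥H.edgeSet,
      (t' = .top1 ∨ t' = .top2) ∧ t ≠ t' := by
    rcases ht with rfl | rfl
    · exact ⟨.top2, Or.inr rfl, fun hh => (by cases hh)⟩
    · exact ⟨.top1, Or.inl rfl, fun hh => (by cases hh)⟩
  have nocov_t : ∀ z, ¬ PosCov H εH t z := by
    rcases ht with rfl | rfl; exacts [nocov_top1, nocov_top2]
  have nocov_t' : ∀ z, ¬ PosCov H εH t' z := by
    rcases ht' with rfl | rfl; exacts [nocov_top1, nocov_top2]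
  -- every maximal element of Pos(H) is t, h iG', h top1 or h top2
  have hit' : ∀ μ : PosElem VH ↥H.edgeSet, (∀ z, ¬ PosCov H εH μ z) →
      μ = t ∨ μ = h iG' ∨ μ = h .top1 ∨ μ = h .top2 := by
    intro μ hμ
    rcases hit hsurj hpm μ hμ with h0 | h0 | h0 | h0
    · rcases hset with ⟨rfl, rfl⟩ | ⟨rfl, rfl⟩
      · exact Or.inl (h0.trans hiGt)
      · exact Or.inr (Or.inl h0)
    · rcases hset with ⟨rfl, rfl⟩ | ⟨rfl, rfl⟩
      · exact Or.inr (Or.inl h0)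
      · exact Or.inl (h0.trans hiGt)
    · exact Or.inr (Or.inr (Or.inl h0))
    · exact Or.inr (Or.inr (Or.inr h0))
  have htne : ∀ μ : PosElem VH ↥H.edgeSet, μ = .infA ∨ μ = .infB → μ ≠ t := by
    rintro μ (rfl | rfl) <;> rcases ht with rfl | rfl <;> exact fun hh => (by cases hh)
  have pA : (.infA : PosElem VH ↥H.edgeSet) = h iG' ∨ (.infA : PosElem VH ↥H.edgeSet) = h .top1 ∨
      (.infA : PosElem VH ↥H.edgeSet) = h .top2 := by
    rcases hit' .infA nocov_infA with h0 | h0 | h0 | h0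
    · exact absurd h0 (htne _ (Or.inl rfl))
    · exact Or.inl h0
    · exact Or.inr (Or.inl h0)
    · exact Or.inr (Or.inr h0)
  have pB : (.infB : PosElem VH ↥H.edgeSet) = h iG' ∨ (.infB : PosElem VH ↥H.edgeSet) = h .top1 ∨
      (.infB : PosElem VH ↥H.edgeSet) = h .top2 := by
    rcases hit' .infB nocov_infB with h0 | h0 | h0 | h0
    · exact absurd h0 (htne _ (Or.inr rfl))
    · exact Or.inl h0
    · exact Or.inr (Or.inl h0)
    · exact Or.inr (Or.inr h0)
  have pT : t' = h iG' ∨ t' = h .top1 ∨ t' = h .top2 := by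
    rcases hit' t' nocov_t' with h0 | h0 | h0 | h0
    · exact absurd h0.symm htt'
    · exact Or.inl h0
    · exact Or.inr (Or.inl h0)
    · exact Or.inr (Or.inr h0)
  have hAB : (.infA : PosElem VH ↥H.edgeSet) ≠ .infB := fun hh => (by cases hh)
  have hAT : (.infA : PosElem VH ↥H.edgeSet) ≠ t' := by
    rcases ht' with rfl | rfl <;> exact fun hh => (by cases hh)
  have hBT : (.infB : PosElem VH ↥H.edgeSet) ≠ t' := by
    rcases ht' with rfl | rfl <;> exact fun hh => (by cases hh)
  have tna : t ≠ h iG' ∧ t ≠ h .top1 ∧ t ≠ h .top2 :=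
    pigeon_t pA pB pT hAB hAT hBT (fun hh => htne _ (Or.inl rfl) hh.symm)
      (fun hh => htne _ (Or.inr rfl) hh.symm) htt'
  have dxa : PosLe H εH (h x) (h iG') := hpm.1 _ _ (posle_single hxiG')
  have dxb : PosLe H εH (h x) (h .top1) := hpm.1 _ _ hx1
  have dxc : PosLe H εH (h x) (h .top2) := hpm.1 _ _ hx2
  cases hhx : h x with
  | ver w =>
     have hxt : PosLe H εH (h x) t := by
       rw [hhx]
       rcases ht with rfl | rfl
       · exact posle_head (.ver_verA _) (verA_le_tops hεH _).1
       · exact posle_head (.ver_verA _) (verA_le_tops hεH _).2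
     obtain ⟨z, hxz, hzt⟩ := hpm.2 x t hxt
     obtain ⟨m, hzm, hm⟩ := exists_max (G := G) (ε := εG) z
     have h5 : PosLe H εH (h z) (h m) := hpm.1 _ _ hzm
     rw [hzt] at h5
     have h6 : h m = t := le_of_nocov h5 nocov_t
     rcases hm with rfl | rfl | rfl | rfl
     · exact tna.2.1 h6.symm
     · exact tna.2.2 h6.symm
     · rcases hset with ⟨rfl, h7⟩ | ⟨h7, rfl⟩
       · exact hxniG (posle_trans hxz hzm)
       · exact tna.1 h6.symm
     · rcases hset with ⟨rfl, rfl⟩ | ⟨h7, h8⟩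
       · exact tna.1 h6.symm
       · rw [h7] at hxniG; exact hxniG (posle_trans hxz hzm)
  | verA w =>
     have hxt : PosLe H εH (h x) t := by
       rw [hhx]
       rcases ht with rfl | rfl
       · exact (verA_le_tops hεH _).1
       · exact (verA_le_tops hεH _).2
     obtain ⟨z, hxz, hzt⟩ := hpm.2 x t hxt
     obtain ⟨m, hzm, hm⟩ := exists_max (G := G) (ε := εG) z
     have h5 : PosLe H εH (h z) (h m) := hpm.1 _ _ hzm
     rw [hzt] at h5
     have h6 : h m = t := le_of_nocov h5 nocov_t
     rcases hm with rfl | rfl | rfl | rfl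
     · exact tna.2.1 h6.symm
     · exact tna.2.2 h6.symm
     · rcases hset with ⟨rfl, h7⟩ | ⟨h7, rfl⟩
       · exact hxniG (posle_trans hxz hzm)
       · exact tna.1 h6.symm
     · rcases hset with ⟨rfl, rfl⟩ | ⟨h7, h8⟩
       · exact tna.1 h6.symm
       · rw [h7] at hxniG; exact hxniG (posle_trans hxz hzm)
  | verB w =>
     have hxt : PosLe H εH (h x) t := by
       rw [hhx]
       rcases ht with rfl | rfl
       · exact (verB_le_tops hεH _).1
       · exact (verB_le_tops hεH _).2
     obtain ⟨z, hxz, hzt⟩ := hpm.2 x t hxt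
     obtain ⟨m, hzm, hm⟩ := exists_max (G := G) (ε := εG) z
     have h5 : PosLe H εH (h z) (h m) := hpm.1 _ _ hzm
     rw [hzt] at h5
     have h6 : h m = t := le_of_nocov h5 nocov_t
     rcases hm with rfl | rfl | rfl | rfl
     · exact tna.2.1 h6.symm
     · exact tna.2.2 h6.symm
     · rcases hset with ⟨rfl, h7⟩ | ⟨h7, rfl⟩
       · exact hxniG (posle_trans hxz hzm)
       · exact tna.1 h6.symm
     · rcases hset with ⟨rfl, rfl⟩ | ⟨h7, h8⟩
       · exact tna.1 h6.symm
       · rw [h7] at hxniG; exact hxniG (posle_trans hxz hzm)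
  | edge1 f =>
     have hxt : PosLe H εH (h x) t := by
       rw [hhx]
       rcases ht with rfl | rfl
       · exact posle_single (.edge1_top1 _)
       · exact posle_single (.edge1_top2 _)
     obtain ⟨z, hxz, hzt⟩ := hpm.2 x t hxt
     obtain ⟨m, hzm, hm⟩ := exists_max (G := G) (ε := εG) z
     have h5 : PosLe H εH (h z) (h m) := hpm.1 _ _ hzm
     rw [hzt] at h5
     have h6 : h m = t := le_of_nocov h5 nocov_t
     rcases hm with rfl | rfl | rfl | rfl
     · exact tna.2.1 h6.symm
     · exact tna.2.2 h6.symm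
     · rcases hset with ⟨rfl, h7⟩ | ⟨h7, rfl⟩
       · exact hxniG (posle_trans hxz hzm)
       · exact tna.1 h6.symm
     · rcases hset with ⟨rfl, rfl⟩ | ⟨h7, h8⟩
       · exact tna.1 h6.symm
       · rw [h7] at hxniG; exact hxniG (posle_trans hxz hzm)
  | edge2 f =>
     have hxt : PosLe H εH (h x) t := by
       rw [hhx]
       rcases ht with rfl | rfl
       · exact posle_single (.edge2_top1 _)
       · exact posle_single (.edge2_top2 _)
     obtain ⟨z, hxz, hzt⟩ := hpm.2 x t hxt
     obtain ⟨m, hzm, hm⟩ := exists_max (G := G) (ε := εG) z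
     have h5 : PosLe H εH (h z) (h m) := hpm.1 _ _ hzm
     rw [hzt] at h5
     have h6 : h m = t := le_of_nocov h5 nocov_t
     rcases hm with rfl | rfl | rfl | rfl
     · exact tna.2.1 h6.symm
     · exact tna.2.2 h6.symm
     · rcases hset with ⟨rfl, h7⟩ | ⟨h7, rfl⟩
       · exact hxniG (posle_trans hxz hzm)
       · exact tna.1 h6.symm
     · rcases hset with ⟨rfl, rfl⟩ | ⟨h7, h8⟩
       · exact tna.1 h6.symm
       · rw [h7] at hxniG; exact hxniG (posle_trans hxz hzm)
  | top1 =>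
     rw [hhx] at dxa dxb dxc
     have ea := le_of_nocov dxa nocov_top1
     have eb := le_of_nocov dxb nocov_top1
     have ec := le_of_nocov dxc nocov_top1
     have hAeq : (.infA : PosElem VH ↥H.edgeSet) = h iG' := by
       rcases pA with h0 | h0 | h0
       exacts [h0, h0.trans (eb.trans ea.symm), h0.trans (ec.trans ea.symm)]
     have hBeq : (.infB : PosElem VH ↥H.edgeSet) = h iG' := by
       rcases pB with h0 | h0 | h0
       exacts [h0, h0.trans (eb.trans ea.symm), h0.trans (ec.trans ea.symm)]
     exact absurd (hAeq.trans hBeq.symm) (by intro hh; cases hh)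
  | top2 =>
     rw [hhx] at dxa dxb dxc
     have ea := le_of_nocov dxa nocov_top2
     have eb := le_of_nocov dxb nocov_top2
     have ec := le_of_nocov dxc nocov_top2
     have hAeq : (.infA : PosElem VH ↥H.edgeSet) = h iG' := by
       rcases pA with h0 | h0 | h0
       exacts [h0, h0.trans (eb.trans ea.symm), h0.trans (ec.trans ea.symm)]
     have hBeq : (.infB : PosElem VH ↥H.edgeSet) = h iG' := by
       rcases pB with h0 | h0 | h0
       exacts [h0, h0.trans (eb.trans ea.symm), h0.trans (ec.trans ea.symm)]
     exact absurd (hAeq.trans hBeq.symm) (by intro hh; cases hh)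
  | infA =>
     rw [hhx] at dxa dxb dxc
     have ea := le_of_nocov dxa nocov_infA
     have eb := le_of_nocov dxb nocov_infA
     have ec := le_of_nocov dxc nocov_infA
     have hAeq : (.infA : PosElem VH ↥H.edgeSet) = h iG' := by
       rcases pA with h0 | h0 | h0
       exacts [h0, h0.trans (eb.trans ea.symm), h0.trans (ec.trans ea.symm)]
     have hBeq : (.infB : PosElem VH ↥H.edgeSet) = h iG' := by
       rcases pB with h0 | h0 | h0
       exacts [h0, h0.trans (eb.trans ea.symm), h0.trans (ec.trans ea.symm)]
     exact absurd (hAeq.trans hBeq.symm) (by intro hh; cases hh)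
  | infB =>
     rw [hhx] at dxa dxb dxc
     have ea := le_of_nocov dxa nocov_infB
     have eb := le_of_nocov dxb nocov_infB
     have ec := le_of_nocov dxc nocov_infB
     have hAeq : (.infA : PosElem VH ↥H.edgeSet) = h iG' := by
       rcases pA with h0 | h0 | h0
       exacts [h0, h0.trans (eb.trans ea.symm), h0.trans (ec.trans ea.symm)]
     have hBeq : (.infB : PosElem VH ↥H.edgeSet) = h iG' := by
       rcases pB with h0 | h0 | h0
       exacts [h0, h0.trans (eb.trans ea.symm), h0.trans (ec.trans ea.symm)]
     exact absurd (hAeq.trans hBeq.symm) (by intro hh; cases hh)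

end PM

end PosInfAux

theorem inf_maps_onto_inf {VG VH : Type} [Fintype VG] [Fintype VH] [Nonempty VH]
    (G : SimpleGraph VG) (H : SimpleGraph VH)
    (εG : ↥G.edgeSet → VG × VG) (hεG : OrientOK G εG)
    (εH : ↥H.edgeSet → VH × VH) (hεH : OrientOK H εH)
    (h : PosElem VG ↥G.edgeSet → PosElem VH ↥H.edgeSet)
    (hsurj : Function.Surjective h)
    (hpm : IsPMorphismRel (PosLe G εG) (PosLe H εH) h) :
    h '' {PosElem.infA, PosElem.infB} = {PosElem.infA, PosElem.infB} := by
  classical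
  open PosInfAux in
  -- VG is nonempty
  have hVG : Nonempty VG := by
    obtain ⟨w0⟩ := ‹Nonempty VH›
    obtain ⟨x0, hx0⟩ := hsurj (.ver w0)
    cases x0 with
    | ver v => exact ⟨v⟩
    | verA v => exact ⟨v⟩
    | verB v => exact ⟨v⟩
    | edge1 e => exact ⟨(εG e).1⟩
    | edge2 e => exact ⟨(εG e).1⟩
    | top1 | top2 | infA | infB =>
      exfalso
      obtain ⟨z, hz, hz2⟩ := hpm.2 _ (.verA w0)
        (by rw [hx0]; exact posle_single (.ver_verA w0))
      have hz3 := le_of_nocov hz (by intro u hu; cases hu)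
      rw [hz3, hx0] at hz2
      exact (by cases hz2)
  obtain ⟨v⟩ := hVG
  -- image of maximal elements is maximal
  have hmaxA : ∀ y, PosLe H εH (h .infA) y → y = h .infA := by
    intro y hy
    obtain ⟨z, hz, rfl⟩ := hpm.2 _ y hy
    rw [le_of_nocov hz nocov_infA]
  have hmaxB : ∀ y, PosLe H εH (h .infB) y → y = h .infB := by
    intro y hy
    obtain ⟨z, hz, rfl⟩ := hpm.2 _ y hy
    rw [le_of_nocov hz nocov_infB]
  have h1 : h .infA = .infA ∨ h .infA = .infB := by
    cases hfA : h (.infA) with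
    | infA => exact Or.inl rfl
    | infB => exact Or.inr rfl
    | top1 =>
        exact absurd hfA (fun hh => core hεH hsurj hpm .infA .infB (.verB v)
          (Or.inl ⟨rfl, rfl⟩) (.verB_infB v) (verB_le_tops hεG v).1 (verB_le_tops hεG v).2
          (verB_not_le_infA v) .top1 (Or.inl rfl) hh)
    | top2 =>
        exact absurd hfA (fun hh => core hεH hsurj hpm .infA .infB (.verB v)
          (Or.inl ⟨rfl, rfl⟩) (.verB_infB v) (verB_le_tops hεG v).1 (verB_le_tops hεG v).2
          (verB_not_le_infA v) .top2 (Or.inr rfl) hh)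
    | ver w =>
        exfalso
        have := hmaxA (.verA w) (by rw [hfA]; exact posle_single (.ver_verA w))
        rw [hfA] at this; exact (by cases this)
    | verA w =>
        exfalso
        have := hmaxA .infA (by rw [hfA]; exact posle_single (.verA_infA w))
        rw [hfA] at this; exact (by cases this)
    | verB w =>
        exfalso
        have := hmaxA .infB (by rw [hfA]; exact posle_single (.verB_infB w))
        rw [hfA] at this; exact (by cases this)
    | edge1 f =>
        exfalso
        have := hmaxA .top1 (by rw [hfA]; exact posle_single (.edge1_top1 f))
        rw [hfA] at this; exact (by cases this)
    | edge2 f =>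
        exfalso
        have := hmaxA .top1 (by rw [hfA]; exact posle_single (.edge2_top1 f))
        rw [hfA] at this; exact (by cases this)
  have h2 : h .infB = .infA ∨ h .infB = .infB := by
    cases hfB : h (.infB) with
    | infA => exact Or.inl rfl
    | infB => exact Or.inr rfl
    | top1 =>
        exact absurd hfB (fun hh => core hεH hsurj hpm .infB .infA (.verA v)
          (Or.inr ⟨rfl, rfl⟩) (.verA_infA v) (verA_le_tops hεG v).1 (verA_le_tops hεG v).2
          (verA_not_le_infB v) .top1 (Or.inl rfl) hh)
    | top2 =>
        exact absurd hfB (fun hh => core hεH hsurj hpm .infB .infA (.verA v)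
          (Or.inr ⟨rfl, rfl⟩) (.verA_infA v) (verA_le_tops hεG v).1 (verA_le_tops hεG v).2
          (verA_not_le_infB v) .top2 (Or.inr rfl) hh)
    | ver w =>
        exfalso
        have := hmaxB (.verA w) (by rw [hfB]; exact posle_single (.ver_verA w))
        rw [hfB] at this; exact (by cases this)
    | verA w =>
        exfalso
        have := hmaxB .infA (by rw [hfB]; exact posle_single (.verA_infA w))
        rw [hfB] at this; exact (by cases this)
    | verB w =>
        exfalso
        have := hmaxB .infB (by rw [hfB]; exact posle_single (.verB_infB w))
        rw [hfB] at this; exact (by cases this)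
    | edge1 f =>
        exfalso
        have := hmaxB .top1 (by rw [hfB]; exact posle_single (.edge1_top1 f))
        rw [hfB] at this; exact (by cases this)
    | edge2 f =>
        exfalso
        have := hmaxB .top1 (by rw [hfB]; exact posle_single (.edge2_top1 f))
        rw [hfB] at this; exact (by cases this)
  have hne : h .infA ≠ h .infB := by
    intro heq
    have p1 := hit hsurj hpm .infA nocov_infA
    have p2 := hit hsurj hpm .infB nocov_infB
    have p3 := hit hsurj hpm .top1 nocov_top1
    have p4 := hit hsurj hpm .top2 nocov_top2
    rw [heq] at p1 p2 p3 p4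
    have q1 : (.infA : PosElem VH ↥H.edgeSet) = h .infB ∨ (.infA : PosElem VH ↥H.edgeSet) = h .top1 ∨ (.infA : PosElem VH ↥H.edgeSet) = h .top2 := by
      rcases p1 with h0 | h0 | h0 | h0
      exacts [Or.inl h0, Or.inl h0, Or.inr (Or.inl h0), Or.inr (Or.inr h0)]
    have q2 : (.infB : PosElem VH ↥H.edgeSet) = h .infB ∨ (.infB : PosElem VH ↥H.edgeSet) = h .top1 ∨ (.infB : PosElem VH ↥H.edgeSet) = h .top2 := by
      rcases p2 with h0 | h0 | h0 | h0
      exacts [Or.inl h0, Or.inl h0, Or.inr (Or.inl h0), Or.inr (Or.inr h0)]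
    have q3 : (.top1 : PosElem VH ↥H.edgeSet) = h .infB ∨ (.top1 : PosElem VH ↥H.edgeSet) = h .top1 ∨ (.top1 : PosElem VH ↥H.edgeSet) = h .top2 := by
      rcases p3 with h0 | h0 | h0 | h0
      exacts [Or.inl h0, Or.inl h0, Or.inr (Or.inl h0), Or.inr (Or.inr h0)]
    have q4 : (.top2 : PosElem VH ↥H.edgeSet) = h .infB ∨ (.top2 : PosElem VH ↥H.edgeSet) = h .top1 ∨ (.top2 : PosElem VH ↥H.edgeSet) = h .top2 := by
      rcases p4 with h0 | h0 | h0 | h0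
      exacts [Or.inl h0, Or.inl h0, Or.inr (Or.inl h0), Or.inr (Or.inr h0)]
    exact pigeon3 q1 q2 q3 q4
      (fun hh => (by cases hh)) (fun hh => (by cases hh))
      (fun hh => (by cases hh)) (fun hh => (by cases hh))
      (fun hh => (by cases hh)) (fun hh => (by cases hh))
  rw [Set.image_pair]
  rcases h1 with e1 | e1 <;> rcases h2 with e2 | e2 <;> rw [e1, e2]
  · exact absurd (e1.trans e2.symm) hne
  · exact Set.pair_comm _ _
  · exact absurd (e1.trans e2.symm) hne
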